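/- Transporting the product of the Deligne path complex to the Deligne cone complex via the splitting s and the evaluation map ev yields Beilinson's product for the parameter α = 1/2: for all u ∈ C^r and v ∈ C^s, ev(s(u) · s(v)) = u ∪_{1/2} v. -/

import Mathlib

/-!
Setup: `(V, d)` is a cochain complex of `ℚ`-vector spaces indexed by `ℤ`, with
subcomplexes `I, F ⊆ V`.  We model the graded pieces as submodules `V n, I n, F n`
of one ambient `ℚ`-vector space `A`, with one differential `d : A →ₗ[ℚ] A` that maps
`V n` into `V (n+1)` (and similarly for `I`, `F`).

Polynomials `ℚ[x] ⊗ V` with coefficients in `A` are modelled as finitely supported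
functions `ℕ →₀ A`, where `p i` is the coefficient of `xⁱ`.
-/

variable {A : Type*} [AddCommGroup A] [Module ℚ A]

/-- Evaluation at `ε : ℚ` of a polynomial `∑ i, xⁱ ⊗ vᵢ`. -/
noncomputable def evalAt (ε : ℚ) : (ℕ →₀ A) →ₗ[ℚ] A :=
  Finsupp.lsum ℚ fun i : ℕ => ε ^ i • (LinearMap.id : A →ₗ[ℚ] A)

/-- Formal derivative `∂ₓ` in the polynomial variable `x`. -/
noncomputable def polyDeriv : (ℕ →₀ A) →ₗ[ℚ] (ℕ →₀ A) :=
  Finsupp.lsum ℚ fun i : ℕ =>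
    (Finsupp.lsingle (R := ℚ) (i - 1)).comp ((i : ℚ) • (LinearMap.id : A →ₗ[ℚ] A))

/-- Apply a linear map `d` to all coefficients (this is `d_V`). -/
noncomputable def coeffMap (d : A →ₗ[ℚ] A) : (ℕ →₀ A) →ₗ[ℚ] (ℕ →₀ A) :=
  Finsupp.mapRange.linearMap d

/-- `∫₀¹ q := ∑ i, vᵢ / (i+1)`. -/
noncomputable def int01 : (ℕ →₀ A) →ₗ[ℚ] A :=
  Finsupp.lsum ℚ fun i : ℕ => ((i : ℚ) + 1)⁻¹ • (LinearMap.id : A →ₗ[ℚ] A)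

/-- `∫₀ˣ q := ∑ i, x^(i+1)/(i+1) ⊗ vᵢ`. -/
noncomputable def int0x : (ℕ →₀ A) →ₗ[ℚ] (ℕ →₀ A) :=
  Finsupp.lsum ℚ fun i : ℕ =>
    (Finsupp.lsingle (R := ℚ) (i + 1)).comp (((i : ℚ) + 1)⁻¹ • (LinearMap.id : A →ₗ[ℚ] A))

/-- Membership in degree `n` of the Deligne cone complex `Cⁿ = Iⁿ ⊕ Fⁿ ⊕ V^(n-1)`. -/
def MemC (I F V : ℤ → Submodule ℚ A) (n : ℤ) (x : A × A × A) : Prop :=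
  x.1 ∈ I n ∧ x.2.1 ∈ F n ∧ x.2.2 ∈ V (n - 1)

/-- Membership in degree `n` of the Deligne path complex `Pⁿ`: a pair `(p, q)` with
`p ∈ ℚ[x] ⊗ Vⁿ`, `q ∈ ℚ[x] ⊗ V^(n-1)`, `p(0) ∈ Iⁿ` and `p(1) ∈ Fⁿ`. -/
def MemP (I F V : ℤ → Submodule ℚ A) (n : ℤ) (w : (ℕ →₀ A) × (ℕ →₀ A)) : Prop :=
  (∀ i, w.1 i ∈ V n) ∧ (∀ i, w.2 i ∈ V (n - 1)) ∧
    evalAt 0 w.1 ∈ I n ∧ evalAt 1 w.1 ∈ F n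

/-- Differential of the cone complex: `d (a, b, c) = (d a, d b, b - a - d c)`. -/
noncomputable def dCone (d : A →ₗ[ℚ] A) (x : A × A × A) : A × A × A :=
  (d x.1, d x.2.1, x.2.1 - x.1 - d x.2.2)

/-- Differential of the path complex: `d (p, q) = (d_V p, ∂ₓ p - d_V q)`. -/
noncomputable def dPath (d : A →ₗ[ℚ] A) (w : (ℕ →₀ A) × (ℕ →₀ A)) : (ℕ →₀ A) × (ℕ →₀ A) :=
  (coeffMap d w.1, polyDeriv w.1 - coeffMap d w.2)

/-- The evaluation map `ev (p, q) = (p(0), p(1), ∫₀¹ q)`. -/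
noncomputable def evMap : (ℕ →₀ A) × (ℕ →₀ A) → A × A × A :=
  fun w => (evalAt 0 w.1, evalAt 1 w.1, int01 w.2)

/-- The splitting `s (a, b, c) = ((1-x) ⊗ a + x ⊗ b, 1 ⊗ c)`. -/
noncomputable def sMap : A × A × A → (ℕ →₀ A) × (ℕ →₀ A) :=
  fun x => (Finsupp.single 0 x.1 + Finsupp.single 1 (x.2.1 - x.1), Finsupp.single 0 x.2.2)

/-- Beilinson's product `∪_α` on the Deligne cone complex; `r` is the (cohomological)
degree of the first factor.  `μ` is the graded product of the underlying complex `V`. -/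
noncomputable def cup (μ : A →ₗ[ℚ] A →ₗ[ℚ] A) (α : ℚ) (r : ℤ) (x y : A × A × A) :
    A × A × A :=
  (μ x.1 y.1, μ x.2.1 y.2.1,
    ((1 - α) * (-1 : ℚ) ^ r) • μ x.1 y.2.2 + (α * (-1 : ℚ) ^ r) • μ x.2.1 y.2.2 +
      α • μ x.2.2 y.1 + (1 - α) • μ x.2.2 y.2.1)

/-- Product of two coefficient polynomials (`ℚ[x] ⊗ V`-elements): polynomials in `x` are
multiplied and the coefficients are multiplied using `μ`. -/
noncomputable def polyMul (μ : A →ₗ[ℚ] A →ₗ[ℚ] A) (p q : ℕ →₀ A) : ℕ →₀ A :=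
  p.sum fun i a => q.sum fun j b => Finsupp.single (i + j) (μ a b)

/-- The product on the Deligne path complex, where the first factor has degree `r`:
`(p, q) · (p̃, q̃) = (p p̃, (-1)^r p q̃ + q p̃)`. -/
noncomputable def mulP (μ : A →ₗ[ℚ] A →ₗ[ℚ] A) (r : ℤ) (w w' : (ℕ →₀ A) × (ℕ →₀ A)) :
    (ℕ →₀ A) × (ℕ →₀ A) :=
  (polyMul μ w.1 w'.1, ((-1 : ℚ) ^ r) • polyMul μ w.1 w'.2 + polyMul μ w.2 w'.1)

/-!
Evaluation at a point is multiplicative for `polyMul`, and the path `s u` runs from `a` to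
`b`, so the first two components of `ev (s u · s v)` are `a ã` and `b b̃`. In the third
component only the linear path `(1 - x) a + x b` is integrated against constants, and `∫₀¹`
of a linear polynomial is the mean of its endpoint values (trapezoid rule); this is where
`α = 1/2` comes from.
-/

section

open Finsupp

variable (μ : A →ₗ[ℚ] A →ₗ[ℚ] A)

@[simp]
lemma polyMul_single_single (i j : ℕ) (a b : A) :
    polyMul μ (single i a) (single j b) = single (i + j) (μ a b) := by
  simp [polyMul, sum_single_index]

lemma polyMul_add_left (p p' q : ℕ →₀ A) :
    polyMul μ (p + p') q = polyMul μ p q + polyMul μ p' q := by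
  unfold polyMul
  rw [sum_add_index] <;> simp [sum_add]

lemma polyMul_add_right (p q q' : ℕ →₀ A) :
    polyMul μ p (q + q') = polyMul μ p q + polyMul μ p q' := by
  unfold polyMul
  rw [← sum_add]
  congr 1
  ext i a
  rw [sum_add_index] <;> simp

@[simp]
lemma evalAt_single (ε : ℚ) (i : ℕ) (a : A) : evalAt ε (single i a) = ε ^ i • a := by
  simp [evalAt]

@[simp]
lemma int01_single (i : ℕ) (a : A) : int01 (single i a) = ((i : ℚ) + 1)⁻¹ • a := by
  simp [int01]

lemma evalAt_polyMul (ε : ℚ) (p q : ℕ →₀ A) :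
    evalAt ε (polyMul μ p q) = μ (evalAt ε p) (evalAt ε q) := by
  induction p using Finsupp.induction_linear with
  | zero => simp [polyMul]
  | add p p' hp hp' => simp only [polyMul_add_left, map_add, hp, hp', LinearMap.add_apply]
  | single i a =>
    induction q using Finsupp.induction_linear with
    | zero => simp [polyMul]
    | add q q' hq hq' => simp only [polyMul_add_right, map_add, hq, hq']
    | single j b => simp [pow_add, mul_smul, smul_comm (ε ^ i)]

noncomputable def linPath (a b : A) : ℕ →₀ A :=
  single 0 a + single 1 (b - a)

omit [Module ℚ A] in
lemma sMap_eq (x : A × A × A) : sMap x = (linPath x.1 x.2.1, single 0 x.2.2) := rfl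

@[simp]
lemma evalAt_zero_linPath (a b : A) : evalAt 0 (linPath a b) = a := by
  simp [linPath]

@[simp]
lemma evalAt_one_linPath (a b : A) : evalAt 1 (linPath a b) = b := by
  simp [linPath]

lemma int01_linPath (a b : A) : int01 (linPath a b) = (1 / 2 : ℚ) • (a + b) := by
  simp only [linPath, map_add, int01_single]
  module

lemma polyMul_linPath_single_zero (a b c : A) :
    polyMul μ (linPath a b) (single 0 c) = linPath (μ a c) (μ b c) := by
  simp only [linPath, polyMul_add_left, polyMul_single_single, map_sub, LinearMap.sub_apply]

lemma polyMul_single_zero_linPath (a b c : A) :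
    polyMul μ (single 0 c) (linPath a b) = linPath (μ c a) (μ c b) := by
  simp only [linPath, polyMul_add_right, polyMul_single_single, map_sub]

end

theorem ev_s_mul_eq_cup_half_general
    (V I F : ℤ → Submodule ℚ A) (μ : A →ₗ[ℚ] A →ₗ[ℚ] A) :
    ∀ (r s : ℤ) (u v : A × A × A), MemC I F V r u → MemC I F V s v →
      evMap (mulP μ r (sMap u) (sMap v)) = cup μ (1/2) r u v := by
  rintro r - ⟨a, b, c⟩ ⟨a', b', c'⟩ - -
  simp only [evMap, mulP, sMap_eq, cup, evalAt_polyMul, evalAt_zero_linPath,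
    evalAt_one_linPath, polyMul_linPath_single_zero, polyMul_single_zero_linPath, map_add,
    map_smul, int01_linPath, Prod.mk.injEq, true_and]
  module

/-- Transporting the product of the Deligne path complex to the cone
complex via the splitting `s` and the evaluation map `ev` yields Beilinson's product for
the parameter `α = 1/2`: `ev (s u · s v) = u ∪_{1/2} v` for `u ∈ C^r`, `v ∈ C^s`. -/
theorem ev_s_mul_eq_cup_half
    (V I F : ℤ → Submodule ℚ A) (d : A →ₗ[ℚ] A) (μ : A →ₗ[ℚ] A →ₗ[ℚ] A)
    (hd2 : ∀ a : A, d (d a) = 0)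
    (hIV : ∀ n, I n ≤ V n) (hFV : ∀ n, F n ≤ V n)
    (hdV : ∀ n, ∀ a ∈ V n, d a ∈ V (n + 1))
    (hdI : ∀ n, ∀ a ∈ I n, d a ∈ I (n + 1))
    (hdF : ∀ n, ∀ a ∈ F n, d a ∈ F (n + 1))
    (hgrade : ∀ (r s : ℤ), ∀ a ∈ V r, ∀ b ∈ V s, μ a b ∈ V (r + s))
    (hgradeI : ∀ (r s : ℤ), ∀ a ∈ I r, ∀ b ∈ I s, μ a b ∈ I (r + s))
    (hgradeF : ∀ (r s : ℤ), ∀ a ∈ F r, ∀ b ∈ F s, μ a b ∈ F (r + s))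
    (hLeib : ∀ (r : ℤ), ∀ u ∈ V r, ∀ v : A,
      d (μ u v) = μ (d u) v + ((-1 : ℚ) ^ r) • μ u (d v)) :
    ∀ (r s : ℤ) (u v : A × A × A), MemC I F V r u → MemC I F V s v →
      evMap (mulP μ r (sMap u) (sMap v)) = cup μ (1/2) r u v :=
  ev_s_mul_eq_cup_half_general V I F μ
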